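/- Let M ∈ ℝ^{n×n} satisfy zᵀMz ≥ 0 for all z ∈ ℝⁿ, let q ∈ ℝⁿ, let F(x) = Mx + q, and let S, H ⊆ ℝⁿ be closed convex sets. Suppose x₀ is a solution of VI(S, F) with x₀ ∈ H. Then every solution x of VI(S ∩ H, F) satisfies (M + Mᵀ)x = (M + Mᵀ)x₀, and moreover either x is a solution of VI(S, F) or x lies on the topological boundary of S ∩ H. -/

import Mathlib

/-!
Testing each variational inequality at the other solution and adding gives
`(x - x₀)ᵀ M (x - x₀) ≤ 0`, hence `= 0`. Since `M + Mᵀ` is positive semidefinite, its quadratic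
form vanishes only on its kernel, so `(M + Mᵀ)(x - x₀) = 0`. If `x` is not on the boundary of
`S ∩ H` it is an interior point, where the inequality forces `F x = 0`; then `x` solves `VI(S, F)`.
-/

open Matrix Filter Topology

section

variable {ι : Type*} [Fintype ι]

def IsVISolution (S : Set (ι → ℝ)) (F : (ι → ℝ) → ι → ℝ) (x : ι → ℝ) : Prop :=
  x ∈ S ∧ ∀ y ∈ S, 0 ≤ (y - x) ⬝ᵥ F x

theorem dotProduct_transpose_mulVec_self {R : Type*} [CommSemiring R] (M : Matrix ι ι R)
    (z : ι → R) : z ⬝ᵥ Mᵀ *ᵥ z = z ⬝ᵥ M *ᵥ z := by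
  rw [mulVec_transpose, dotProduct_comm, dotProduct_mulVec]

theorem posSemidef_add_transpose {M : Matrix ι ι ℝ} (hM : ∀ z, 0 ≤ z ⬝ᵥ M *ᵥ z) :
    (M + Mᵀ).PosSemidef := by
  refine .of_dotProduct_mulVec_nonneg (isSymm_add_transpose_self M) fun z ↦ ?_
  rw [star_trivial, add_mulVec, dotProduct_add, dotProduct_transpose_mulVec_self]
  exact add_nonneg (hM z) (hM z)

theorem add_transpose_mulVec_eq_zero {M : Matrix ι ι ℝ} (hM : ∀ z, 0 ≤ z ⬝ᵥ M *ᵥ z)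
    {z : ι → ℝ} (hz : z ⬝ᵥ M *ᵥ z = 0) : (M + Mᵀ) *ᵥ z = 0 := by
  refine ((posSemidef_add_transpose hM).dotProduct_mulVec_zero_iff z).1 ?_
  rw [star_trivial, add_mulVec, dotProduct_add, dotProduct_transpose_mulVec_self, hz, add_zero]

namespace IsVISolution

variable {S K : Set (ι → ℝ)} {F : (ι → ℝ) → ι → ℝ} {x x₀ : ι → ℝ}

theorem eq_zero_of_mem_interior (h : IsVISolution K F x) (hx : x ∈ interior K) : F x = 0 := by
  set v := F x
  have hline : ∀ᶠ t in 𝓝 (0 : ℝ), x + t • v ∈ K := by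
    have : Tendsto (fun t : ℝ ↦ x + t • v) (𝓝 0) (𝓝 x) :=
      Continuous.tendsto' (by fun_prop) 0 x (by simp)
    exact this (mem_interior_iff_mem_nhds.1 hx)
  have hmin : IsLocalMin (fun t : ℝ ↦ t * (v ⬝ᵥ v)) 0 := by
    filter_upwards [hline] with t ht
    simpa [smul_dotProduct] using h.2 _ ht
  exact dotProduct_self_eq_zero.1 (hmin.hasDerivAt_eq_zero (hasDerivAt_mul_const _))

theorem of_mem_interior (h : IsVISolution K F x) (hx : x ∈ interior K) (hxS : x ∈ S) :
    IsVISolution S F x :=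
  ⟨hxS, fun y _ ↦ by rw [h.eq_zero_of_mem_interior hx, dotProduct_zero]⟩

theorem dotProduct_mulVec_sub_eq_zero {M : Matrix ι ι ℝ} {q : ι → ℝ}
    (hM : ∀ z, 0 ≤ z ⬝ᵥ M *ᵥ z) (h₀ : IsVISolution S (fun y ↦ M *ᵥ y + q) x₀)
    (h : IsVISolution K (fun y ↦ M *ᵥ y + q) x) (hxS : x ∈ S) (hx₀K : x₀ ∈ K) :
    (x - x₀) ⬝ᵥ M *ᵥ (x - x₀) = 0 := by
  have hsum : (x - x₀) ⬝ᵥ (M *ᵥ x₀ + q) + (x₀ - x) ⬝ᵥ (M *ᵥ x + q)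
      = -((x - x₀) ⬝ᵥ M *ᵥ (x - x₀)) := by
    simp only [mulVec_sub, dotProduct_sub, sub_dotProduct, dotProduct_add]
    ring
  have := h₀.2 x hxS
  have := h.2 x₀ hx₀K
  linarith [hM (x - x₀)]

end IsVISolution

end

theorem VI_intersection_solutions_general (n : ℕ) (M : Matrix (Fin n) (Fin n) ℝ)
    (q : Fin n → ℝ) (S H : Set (Fin n → ℝ))
    (hpsd : ∀ z : Fin n → ℝ, 0 ≤ z ⬝ᵥ M.mulVec z)
    (x₀ : Fin n → ℝ) (hx₀S : x₀ ∈ S)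
    (hx₀ : ∀ y ∈ S, 0 ≤ (y - x₀) ⬝ᵥ (M.mulVec x₀ + q)) (hx₀H : x₀ ∈ H)
    (x : Fin n → ℝ) (hxSH : x ∈ S ∩ H)
    (hx : ∀ y ∈ S ∩ H, 0 ≤ (y - x) ⬝ᵥ (M.mulVec x + q)) :
    (M + Mᵀ).mulVec x = (M + Mᵀ).mulVec x₀ ∧
      ((x ∈ S ∧ ∀ y ∈ S, 0 ≤ (y - x) ⬝ᵥ (M.mulVec x + q)) ∨
        x ∈ frontier (S ∩ H)) := by
  have h₀ : IsVISolution S (fun y ↦ M *ᵥ y + q) x₀ := ⟨hx₀S, hx₀⟩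
  have h : IsVISolution (S ∩ H) (fun y ↦ M *ᵥ y + q) x := ⟨hxSH, hx⟩
  refine ⟨?_, ?_⟩
  · rw [← sub_eq_zero, ← mulVec_sub]
    exact add_transpose_mulVec_eq_zero hpsd
      (h₀.dotProduct_mulVec_sub_eq_zero hpsd h hxSH.1 ⟨hx₀S, hx₀H⟩)
  · by_cases hfr : x ∈ frontier (S ∩ H)
    · exact .inr hfr
    · exact .inl (h.of_mem_interior (self_sdiff_frontier (S ∩ H) ▸ ⟨hxSH, hfr⟩) hxSH.1)

/-- Let `zᵀMz ≥ 0` for all `z`, `F x = M x + q`, `S, H` closed convex, and let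
`x₀` solve `VI(S, F)` with `x₀ ∈ H`. Then every solution `x` of `VI(S ∩ H, F)`
satisfies `(M + Mᵀ)x = (M + Mᵀ)x₀`, and moreover either `x` solves `VI(S, F)`
or `x` lies on the boundary of `S ∩ H`. -/
theorem VI_intersection_solutions (n : ℕ) (M : Matrix (Fin n) (Fin n) ℝ)
    (q : Fin n → ℝ) (S H : Set (Fin n → ℝ))
    (hpsd : ∀ z : Fin n → ℝ, 0 ≤ z ⬝ᵥ M.mulVec z)
    (hSclosed : IsClosed S) (hSconv : Convex ℝ S)
    (hHclosed : IsClosed H) (hHconv : Convex ℝ H)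
    (x₀ : Fin n → ℝ) (hx₀S : x₀ ∈ S)
    (hx₀ : ∀ y ∈ S, 0 ≤ (y - x₀) ⬝ᵥ (M.mulVec x₀ + q)) (hx₀H : x₀ ∈ H)
    (x : Fin n → ℝ) (hxSH : x ∈ S ∩ H)
    (hx : ∀ y ∈ S ∩ H, 0 ≤ (y - x) ⬝ᵥ (M.mulVec x + q)) :
    (M + Mᵀ).mulVec x = (M + Mᵀ).mulVec x₀ ∧
      ((x ∈ S ∧ ∀ y ∈ S, 0 ≤ (y - x) ⬝ᵥ (M.mulVec x + q)) ∨
        x ∈ frontier (S ∩ H)) :=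
  VI_intersection_solutions_general n M q S H hpsd x₀ hx₀S hx₀ hx₀H x hxSH hx
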